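/- Let τ < θ be reals and let Δp and q be continuous ℝˡ-valued functions on [τ,θ]. Suppose there is α > 0 with ‖Δp‖_{i,τ,θ} ≥ α‖Δp‖_{τ,θ}, and suppose ‖q‖_{i,τ,θ} ≤ (α/2)‖Δp‖_{τ,θ} and ‖q‖_{τ,θ} ≤ ‖Δp‖_{τ,θ}. Then ‖Δp + q‖_{i,τ,θ} ≥ (α/4)‖Δp + q‖_{τ,θ}. -/

import Mathlib

open Set Filter Asymptotics MeasureTheory

/-- Euclidean norm of a vector in `ℝˡ`. -/
noncomputable def euclNorm {l : ℕ} (v : Fin l → ℝ) : ℝ := Real.sqrt (∑ i, v i ^ 2)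

/-- `‖q‖_{a,b} = max_{t ∈ [a,b]} |q(t)|`. -/
noncomputable def supNorm {l : ℕ} (a b : ℝ) (q : ℝ → Fin l → ℝ) : ℝ :=
  sSup ((fun t => euclNorm (q t)) '' Set.Icc a b)

/-- `‖q‖_{i,a,b} = ∫_a^b |q(t)| dt`. -/
noncomputable def intNorm {l : ℕ} (a b : ℝ) (q : ℝ → Fin l → ℝ) : ℝ :=
  ∫ t in a..b, euclNorm (q t)

/-
Since ‖q‖_{τ,θ} ≤ ‖Δp‖_{τ,θ}, the triangle inequality gives ‖Δp + q‖_{τ,θ} ≤ 2‖Δp‖_{τ,θ}, while the reverse triangle inequality for the integral norm gives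
‖Δp + q‖_{i,τ,θ} ≥ ‖Δp‖_{i,τ,θ} - ‖q‖_{i,τ,θ} ≥ (α/2)‖Δp‖_{τ,θ} ≥ (α/4)‖Δp + q‖_{τ,θ}.
-/

lemma euclNorm_eq_norm_toLp {l : ℕ} (v : Fin l → ℝ) : euclNorm v = ‖WithLp.toLp 2 v‖ := by
  simp [EuclideanSpace.norm_eq, euclNorm, Real.norm_eq_abs, sq_abs]

lemma euclNorm_add_le {l : ℕ} (v w : Fin l → ℝ) : euclNorm (v + w) ≤ euclNorm v + euclNorm w := by
  simpa only [euclNorm_eq_norm_toLp, WithLp.toLp_add] using norm_add_le _ _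

lemma continuous_euclNorm {l : ℕ} : Continuous (euclNorm (l := l)) := by
  unfold euclNorm
  fun_prop

lemma euclNorm_le_euclNorm_add_add {l : ℕ} (v w : Fin l → ℝ) :
    euclNorm v ≤ euclNorm (v + w) + euclNorm w := by
  simpa only [euclNorm_eq_norm_toLp, WithLp.toLp_add] using norm_le_add_norm_add _ _

section Interval

variable {l : ℕ} {a b : ℝ} {f g : ℝ → Fin l → ℝ}

lemma le_supNorm (hf : ContinuousOn f (Icc a b)) {t : ℝ} (ht : t ∈ Icc a b) :
    euclNorm (f t) ≤ supNorm a b f :=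
  le_csSup ((isCompact_Icc.image_of_continuousOn
    (continuous_euclNorm.comp_continuousOn hf)).bddAbove) (mem_image_of_mem _ ht)

lemma supNorm_le (hab : a ≤ b) {M : ℝ} (h : ∀ t ∈ Icc a b, euclNorm (f t) ≤ M) :
    supNorm a b f ≤ M :=
  csSup_le ((nonempty_Icc.2 hab).image _) (forall_mem_image.2 h)

lemma supNorm_add_le (hab : a ≤ b) (hf : ContinuousOn f (Icc a b))
    (hg : ContinuousOn g (Icc a b)) :
    supNorm a b (fun t => f t + g t) ≤ supNorm a b f + supNorm a b g :=
  supNorm_le hab fun _ ht =>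
    (euclNorm_add_le _ _).trans (add_le_add (le_supNorm hf ht) (le_supNorm hg ht))

lemma intervalIntegrable_euclNorm (hab : a ≤ b) (hf : ContinuousOn f (Icc a b)) :
    IntervalIntegrable (fun t => euclNorm (f t)) volume a b :=
  (continuous_euclNorm.comp_continuousOn hf).intervalIntegrable_of_Icc hab

lemma intNorm_le_intNorm_add_add (hab : a ≤ b) (hf : ContinuousOn f (Icc a b))
    (hg : ContinuousOn g (Icc a b)) :
    intNorm a b f ≤ intNorm a b (fun t => f t + g t) + intNorm a b g := by
  have hfg : IntervalIntegrable (fun t => euclNorm (f t + g t)) volume a b :=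
    intervalIntegrable_euclNorm hab (hf.add hg)
  have hg' := intervalIntegrable_euclNorm hab hg
  rw [intNorm, intNorm, intNorm, ← intervalIntegral.integral_add hfg hg']
  exact intervalIntegral.integral_mono_on hab (intervalIntegrable_euclNorm hab hf) (hfg.add hg')
    fun t _ => euclNorm_le_euclNorm_add_add (f t) (g t)

end Interval

theorem stmt14 (l : ℕ) (τ θ : ℝ) (hτθ : τ < θ)
    (Δp q : ℝ → Fin l → ℝ)
    (hΔpc : ContinuousOn Δp (Set.Icc τ θ)) (hqc : ContinuousOn q (Set.Icc τ θ))
    (α : ℝ) (hα : 0 < α)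
    (h1 : intNorm τ θ Δp ≥ α * supNorm τ θ Δp)
    (h2 : intNorm τ θ q ≤ (α / 2) * supNorm τ θ Δp)
    (h3 : supNorm τ θ q ≤ supNorm τ θ Δp) :
    intNorm τ θ (fun t => Δp t + q t) ≥ (α / 4) * supNorm τ θ (fun t => Δp t + q t) := by
  have hint := intNorm_le_intNorm_add_add hτθ.le hΔpc hqc
  have hsup : supNorm τ θ (fun t => Δp t + q t) ≤ 2 * supNorm τ θ Δp := by
    linarith [supNorm_add_le hτθ.le hΔpc hqc]
  have := mul_le_mul_of_nonneg_left hsup (by positivity : 0 ≤ α / 4)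
  linarith
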